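/- For 0 < q < 1, the 2×2 matrix G = ((1 + √(1−q²))/(2√(1−q²)))·(I + g⃗·σ⃗) with g⃗ = −((1 − √(1−q²))/q)·n⃗ satisfies G ⪰ |m_j⟩⟨m_j| for j = 1,2, where |m_j⟩⟨m_j| = (I + (−1)^{j+1} m⃗·σ⃗)/2, and G ⪰ w·I with w = (1 + √((1−q)/(1+q)))/2. -/

import Mathlib

open Matrix BigOperators
open scoped ComplexOrder

/-!
Every matrix involved has the form `a • 1 + pauli b`. Since `(pauli b)² = |b|² • 1`, for `a > 0`
one has `a • 1 + pauli b = (2a)⁻¹ • ((a • 1 + pauli b)² + (a² - |b|²) • 1)`, which is positive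
semidefinite as soon as `|b| ≤ a`. With `s = √(1 - q²)` the dual variable is
`G = (1 + s)/(2s) • 1 + pauli (-(q/(2s)) • n)`, and by orthonormality of `m, n` the three
differences have Bloch vectors of squared length `q²/(4s²) + 1/4 = 1/(4s²)` resp. `q²/(4s²)`,
exactly the squares of their scalar parts `1/(2s)` resp. `q/(2s)`.
-/

noncomputable def σx : Matrix (Fin 2) (Fin 2) ℂ := !![0, 1; 1, 0]
noncomputable def σy : Matrix (Fin 2) (Fin 2) ℂ := !![0, -Complex.I; Complex.I, 0]
noncomputable def σz : Matrix (Fin 2) (Fin 2) ℂ := !![1, 0; 0, -1]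

/-- `a⃗·σ⃗` for a real Bloch vector `a⃗ ∈ ℝ³`. -/
noncomputable def pauli (a : Fin 3 → ℝ) : Matrix (Fin 2) (Fin 2) ℂ :=
  a 0 • σx + a 1 • σy + a 2 • σz

lemma pauli_add (a b : Fin 3 → ℝ) : pauli (a + b) = pauli a + pauli b := by
  simp only [pauli, Pi.add_apply, add_smul]; abel

lemma pauli_smul (c : ℝ) (a : Fin 3 → ℝ) : pauli (c • a) = c • pauli a := by
  simp only [pauli, Pi.smul_apply, smul_eq_mul, mul_smul, smul_add]

lemma isHermitian_pauli (a : Fin 3 → ℝ) : (pauli a).IsHermitian := by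
  ext i j
  fin_cases i <;> fin_cases j <;> simp [pauli, σx, σy, σz]

lemma pauli_mul_self (a : Fin 3 → ℝ) :
    pauli a * pauli a = (∑ i, a i * a i : ℝ) • (1 : Matrix (Fin 2) (Fin 2) ℂ) := by
  ext i j
  fin_cases i <;> fin_cases j <;>
    simp [pauli, σx, σy, σz, Fin.sum_univ_three, Matrix.mul_apply, Complex.ext_iff] <;>
    (try constructor) <;> ring

lemma posSemidef_smul_one_add_pauli {a : ℝ} {b : Fin 3 → ℝ} (ha : 0 ≤ a)
    (hb : ∑ i, b i * b i ≤ a ^ 2) :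
    (a • (1 : Matrix (Fin 2) (Fin 2) ℂ) + pauli b).PosSemidef := by
  rcases ha.eq_or_lt with rfl | ha
  · have hb0 : b = 0 := dotProduct_self_eq_zero.mp <|
      le_antisymm (by simpa [dotProduct] using hb) (Finset.sum_nonneg fun i _ => mul_self_nonneg _)
    simpa [hb0, pauli] using PosSemidef.zero
  set A := a • (1 : Matrix (Fin 2) (Fin 2) ℂ) + pauli b
  have hA : A = (2 * a)⁻¹ • (Aᴴ * A + (a ^ 2 - ∑ i, b i * b i) • 1) := by
    have hAh : Aᴴ = A :=
      ((isHermitian_one.smul (IsSelfAdjoint.all a)).add (isHermitian_pauli b)).eq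
    have hsq : A * A = (2 * a) • A + (∑ i, b i * b i - a ^ 2) • 1 := by
      simp only [A, add_mul, mul_add, one_mul, mul_one, smul_mul_assoc, mul_smul_comm,
        pauli_mul_self]
      module
    rw [hAh, hsq, add_assoc, ← add_smul, sub_add_sub_cancel, sub_self, zero_smul, add_zero,
      smul_smul, inv_mul_cancel₀ (by positivity), one_smul]
  rw [hA]
  exact ((posSemidef_conjTranspose_mul_self A).add
    (PosSemidef.one.smul (sub_nonneg.mpr hb))).smul (by positivity)

lemma sum_mul_self_smul_add_smul {m n : Fin 3 → ℝ}
    (hmm : ∑ i, m i * m i = 1) (hnn : ∑ i, n i * n i = 1) (hmn : ∑ i, m i * n i = 0) (c d : ℝ) :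
    ∑ i, (c • n + d • m) i * (c • n + d • m) i = c ^ 2 + d ^ 2 := by
  simp only [Fin.sum_univ_three, Pi.add_apply, Pi.smul_apply, smul_eq_mul] at *
  linear_combination d ^ 2 * hmm + c ^ 2 * hnn + 2 * c * d * hmn

lemma posSemidef_smul_one_add_pauli_sub {m n : Fin 3 → ℝ}
    (hmm : ∑ i, m i * m i = 1) (hnn : ∑ i, n i * n i = 1) (hmn : ∑ i, m i * n i = 0)
    {a a' c d : ℝ} (ha : a' ≤ a) (h : c ^ 2 + d ^ 2 ≤ (a - a') ^ 2) :
    (a • (1 : Matrix (Fin 2) (Fin 2) ℂ) + pauli (c • n) - (a' • 1 + pauli (d • m))).PosSemidef := by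
  have hdiff : a • (1 : Matrix (Fin 2) (Fin 2) ℂ) + pauli (c • n) - (a' • 1 + pauli (d • m)) =
      (a - a') • 1 + pauli (c • n + (-d) • m) := by
    simp only [pauli_add, pauli_smul]
    module
  rw [hdiff]
  apply posSemidef_smul_one_add_pauli (sub_nonneg.mpr ha)
  rwa [sum_mul_self_smul_add_smul hmm hnn hmn, neg_sq]

lemma sqrt_div_mul_sqrt_one_sub_sq {q : ℝ} (hq : -1 < q) (hq' : q ≤ 1) :
    Real.sqrt ((1 - q) / (1 + q)) * Real.sqrt (1 - q ^ 2) = 1 - q := by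
  have hq₀ : 0 < 1 + q := by linarith
  rw [← Real.sqrt_mul (div_nonneg (by linarith) hq₀.le),
    show (1 - q) / (1 + q) * (1 - q ^ 2) = (1 - q) ^ 2 by field_simp; ring]
  exact Real.sqrt_sq (by linarith)

/-- the FRIO dual variable `G` dominates both measurement projectors and
`w·I`, for `0 < q < 1`. -/
theorem qubit_FRIO_dual_feasible
    (mv nv : Fin 3 → ℝ)
    (hmm : ∑ i, mv i * mv i = 1) (hnn : ∑ i, nv i * nv i = 1)
    (hmn : ∑ i, mv i * nv i = 0)
    (q : ℝ) (hq0 : 0 < q) (hq1 : q < 1)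
    (gv : Fin 3 → ℝ) (hgv : gv = (-((1 - Real.sqrt (1 - q ^ 2)) / q)) • nv)
    (G M₁ M₂ : Matrix (Fin 2) (Fin 2) ℂ)
    (hG : G = ((1 + Real.sqrt (1 - q ^ 2)) / (2 * Real.sqrt (1 - q ^ 2)) : ℝ) •
        ((1 : Matrix (Fin 2) (Fin 2) ℂ) + pauli gv))
    (hM₁ : M₁ = (2⁻¹ : ℝ) • ((1 : Matrix (Fin 2) (Fin 2) ℂ) + pauli mv))
    (hM₂ : M₂ = (2⁻¹ : ℝ) • ((1 : Matrix (Fin 2) (Fin 2) ℂ) - pauli mv))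
    (w : ℝ) (hw : w = (1 + Real.sqrt ((1 - q) / (1 + q))) / 2) :
    (G - M₁).PosSemidef ∧ (G - M₂).PosSemidef ∧
    (G - w • (1 : Matrix (Fin 2) (Fin 2) ℂ)).PosSemidef := by
  set s := Real.sqrt (1 - q ^ 2)
  have hs2 : s ^ 2 = 1 - q ^ 2 := Real.sq_sqrt (by nlinarith)
  have hs : 0 < s := Real.sqrt_pos.mpr (by nlinarith)
  have hts := sqrt_div_mul_sqrt_one_sub_sq (by linarith : -1 < q) hq1.le
  set g := (1 + s) / (2 * s) with hg
  have hG' : G = g • (1 : Matrix (Fin 2) (Fin 2) ℂ) + pauli ((-(q / (2 * s))) • nv) := by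
    have hc : g * -((1 - s) / q) = -(q / (2 * s)) := by
      rw [hg]; field_simp; linear_combination hs2
    rw [hG, hgv, pauli_smul, smul_add, smul_smul, hc, pauli_smul]
  have hg_half : g - 2⁻¹ = 1 / (2 * s) := by rw [hg]; field_simp; ring
  have hg_w : g - w = q / (2 * s) := by rw [hg, hw]; field_simp; linear_combination -hts
  have hhalf_le : 2⁻¹ ≤ g := by rw [← sub_nonneg, hg_half]; positivity
  have hhalf_bound (d : ℝ) (hd : d ^ 2 = 2⁻¹ ^ 2) :
      (-(q / (2 * s))) ^ 2 + d ^ 2 ≤ (g - 2⁻¹) ^ 2 := by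
    rw [hd, hg_half]; field_simp; linear_combination hs2
  refine ⟨?_, ?_, ?_⟩
  · rw [hG', hM₁, smul_add, ← pauli_smul]
    exact posSemidef_smul_one_add_pauli_sub hmm hnn hmn hhalf_le (hhalf_bound _ rfl)
  · have hM₂' : M₂ = (2⁻¹ : ℝ) • 1 + pauli ((-2⁻¹ : ℝ) • mv) := by
      rw [hM₂, pauli_smul]; module
    rw [hG', hM₂']
    exact posSemidef_smul_one_add_pauli_sub hmm hnn hmn hhalf_le (hhalf_bound _ (neg_sq _))
  · rw [hG', ← add_zero (w • _), ← zero_smul ℝ (pauli mv), ← pauli_smul]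
    refine posSemidef_smul_one_add_pauli_sub hmm hnn hmn ?_ ?_
    · rw [← sub_nonneg, hg_w]; positivity
    · rw [hg_w, neg_sq, zero_pow two_ne_zero, add_zero]
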